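/- Let A be a complete normed unital algebra (Banach algebra) with submultiplicative norm and ‖1‖ = 1, C > 0, and let (a_{r,s})_{0 ≤ r ≤ s} be a family of elements of A such that ‖a_{r,s}‖ ≤ (s − r)·C for all r ≤ s and a_{r,t} = a_{r,s} + a_{s,t} whenever r < s < t. Set g_{r,s} := 1 + a_{r,s} and let U_{r,s} denote the limit of the net of ordered products Θ_α over partitions α of [r,s]. Fix 0 ≤ R < S. Then for every partition α = {R = t₁ < … < t_{n+1} = S} of [R,S] one has ‖(1 − n)·1 + ∑_{j=1}^{n} U_{t_j,t_{j+1}} − g_{R,S}‖ ≤ (1/2)·‖α‖·(S − R)·C²·exp(C·(S − R)), where ‖α‖ := max_j (t_{j+1} − t_j) is the mesh of α. -/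

import Mathlib

/-!
Additivity of `a` gives `a R S = ∑ⱼ a tⱼ tⱼ₊₁`, so the quantity to estimate is
`∑ⱼ (U tⱼ tⱼ₊₁ - g tⱼ tⱼ₊₁)`. On an interval `[r, s]` every ordered product `Θ_β` is dominated,
term by term in its expansion, by the scalar product `∏ (1 + C dᵢ) ≤ exp (C (s - r))`; hence
`‖Θ_β - g r s‖ ≤ exp x - 1 - x ≤ x² / 2 · exp x` with `x = C (s - r)`, and the bound passes to the
limit `U r s`. Summing `(C dⱼ)² / 2 · exp (C dⱼ) ≤ ½ ‖α‖ dⱼ C² exp (C (S - R))` over `j` finishes.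
-/

/-- A partition of the interval `[R, S]`: a finite set of reals containing `R` and `S`
all of whose elements lie in `[R, S]`. -/
def IsPartition (R S : ℝ) (α : Finset ℝ) : Prop :=
  R ∈ α ∧ S ∈ α ∧ ∀ t ∈ α, R ≤ t ∧ t ≤ S

/-- The list of consecutive pairs `(t₁,t₂), (t₂,t₃), …` of the elements of a finite set
of reals, sorted increasingly. -/
noncomputable def consecPairs (α : Finset ℝ) : List (ℝ × ℝ) :=
  (α.sort (· ≤ ·)).zip (α.sort (· ≤ ·)).tail

/-- The ordered product `g t₁ t₂ * g t₂ t₃ * ⋯ * g tₙ tₙ₊₁` over the consecutive points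
`t₁ < t₂ < … < tₙ₊₁` of a partition, taken in increasing order. -/
noncomputable def partitionProd {A : Type*} [Ring A] (g : ℝ → ℝ → A) (α : Finset ℝ) : A :=
  ((consecPairs α).map fun p => g p.1 p.2).prod

/-- The sum `U t₁ t₂ + U t₂ t₃ + ⋯ + U tₙ tₙ₊₁` over the consecutive points of a
partition. -/
noncomputable def partitionSum {A : Type*} [Ring A] (U : ℝ → ℝ → A) (α : Finset ℝ) : A :=
  ((consecPairs α).map fun p => U p.1 p.2).sum

/-- The mesh `max_i (t_{i+1} - t_i)` of a partition. -/
noncomputable def mesh (α : Finset ℝ) : ℝ :=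
  ((consecPairs α).map fun p => p.2 - p.1).foldr max 0

/-- `IsNetLimit g r s u` means that the net `α ↦ partitionProd g α`, indexed by the
partitions of `[r, s]` partially ordered by inclusion, converges to `u`. -/
def IsNetLimit {A : Type*} [NormedRing A] (g : ℝ → ℝ → A) (r s : ℝ) (u : A) : Prop :=
  ∀ ε > 0, ∃ γ : Finset ℝ, IsPartition r s γ ∧
    ∀ α : Finset ℝ, IsPartition r s α → γ ⊆ α → ‖partitionProd g α - u‖ < ε


open scoped Nat

theorem Real.exp_sub_one_sub_le_sq_div_two_mul_exp {x : ℝ} (hx : 0 ≤ x) :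
    Real.exp x - 1 - x ≤ x ^ 2 / 2 * Real.exp x := by
  have hexp : HasSum (fun n : ℕ => x ^ n / n !) (Real.exp x) := by
    simpa [Real.exp_eq_exp_ℝ] using NormedSpace.expSeries_div_hasSum_exp x
  have htail : HasSum (fun n : ℕ => x ^ (n + 2) / (n + 2)!) (Real.exp x - 1 - x) := by
    simpa [Finset.sum_range_succ, sub_sub] using (hasSum_nat_add_iff' 2).mpr hexp
  refine hasSum_le (fun n => ?_) htail (hexp.mul_left (x ^ 2 / 2))
  have hfac : (2 * n ! : ℝ) ≤ (n + 2)! := by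
    have : 2 * n ! ≤ (n + 2)! := by
      rw [Nat.factorial_succ, Nat.factorial_succ, ← mul_assoc]
      exact Nat.mul_le_mul_right _ (by nlinarith)
    exact_mod_cast this
  calc x ^ (n + 2) / (n + 2)! ≤ x ^ n * x ^ 2 / (2 * n !) := by
        rw [pow_add]; gcongr
    _ = x ^ 2 / 2 * (x ^ n / n !) := by ring

theorem List.norm_sum_map_le_sum_map {ι E : Type*} [SeminormedAddCommGroup E] {f : ι → E}
    {g : ι → ℝ} {l : List ι} (h : ∀ i ∈ l, ‖f i‖ ≤ g i) :
    ‖(l.map f).sum‖ ≤ (l.map g).sum :=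
  (List.le_sum_of_subadditive norm norm_zero.le norm_add_le _).trans <| by
    rw [List.map_map]; exact List.sum_le_sum h

theorem List.prod_map_one_add_le_exp_sum {ι : Type*} {w : ι → ℝ} {l : List ι}
    (hw : ∀ i ∈ l, 0 ≤ w i) :
    (l.map fun i => 1 + w i).prod ≤ Real.exp (l.map w).sum := by
  rw [Real.exp_list_sum, List.map_map]
  exact List.prod_map_le_prod_map₀ _ _ (fun i hi => by linarith [hw i hi])
    fun i _ => by simpa [add_comm] using Real.add_one_le_exp (w i)

section Majorant

variable {ι A : Type*} [NormedRing A] [NormOneClass A] {b : ι → A} {w : ι → ℝ}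

theorem List.norm_prod_map_one_add_sub_one_le {l : List ι} (h : ∀ i ∈ l, ‖b i‖ ≤ w i) :
    ‖(l.map fun i => 1 + b i).prod - 1‖ ≤ (l.map fun i => 1 + w i).prod - 1 := by
  induction l with
  | nil => simp
  | cons i l ih =>
    rw [List.forall_mem_cons] at h
    set P := (l.map fun i => 1 + b i).prod
    set Q := (l.map fun i => 1 + w i).prod
    have hP : ‖P - 1‖ ≤ Q - 1 := ih h.2
    have hPQ : ‖P‖ ≤ Q := by linarith [norm_sub_norm_le P 1, norm_one (α := A)]
    simp only [List.map_cons, List.prod_cons]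
    calc ‖(1 + b i) * P - 1‖ = ‖(P - 1) + b i * P‖ := by noncomm_ring
      _ ≤ (Q - 1) + w i * Q := (norm_add_le _ _).trans (add_le_add hP (norm_mul_le_of_le h.1 hPQ))
      _ = (1 + w i) * Q - 1 := by ring

theorem List.norm_prod_map_one_add_sub_one_sub_sum_le {l : List ι} (h : ∀ i ∈ l, ‖b i‖ ≤ w i) :
    ‖(l.map fun i => 1 + b i).prod - 1 - (l.map b).sum‖ ≤
      (l.map fun i => 1 + w i).prod - 1 - (l.map w).sum := by
  induction l with
  | nil => simp
  | cons i l ih =>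
    have hP := List.norm_prod_map_one_add_sub_one_le fun j hj => h j (List.mem_cons_of_mem _ hj)
    rw [List.forall_mem_cons] at h
    set P := (l.map fun i => 1 + b i).prod
    set Q := (l.map fun i => 1 + w i).prod
    simp only [List.map_cons, List.prod_cons, List.sum_cons]
    calc ‖(1 + b i) * P - 1 - (b i + (l.map b).sum)‖
        = ‖(P - 1 - (l.map b).sum) + b i * (P - 1)‖ := by noncomm_ring
      _ ≤ (Q - 1 - (l.map w).sum) + w i * (Q - 1) :=
          (norm_add_le _ _).trans (add_le_add (ih h.2) (norm_mul_le_of_le h.1 hP))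
      _ = (1 + w i) * Q - 1 - (w i + (l.map w).sum) := by ring

end Majorant

theorem List.rel_of_mem_zip_tail {β : Type*} {r : β → β → Prop} {l : List β} (hl : l.Pairwise r)
    {p : β × β} (hp : p ∈ l.zip l.tail) : p.1 ∈ l ∧ p.2 ∈ l ∧ r p.1 p.2 := by
  induction l with
  | nil => simp at hp
  | cons x l ih =>
    rw [List.pairwise_cons] at hl
    cases l with
    | nil => simp at hp
    | cons y l =>
      rw [List.tail_cons, List.zip_cons_cons, List.mem_cons] at hp
      rcases hp with rfl | hp
      · exact ⟨List.mem_cons_self, List.mem_cons_of_mem _ List.mem_cons_self,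
          hl.1 _ List.mem_cons_self⟩
      · obtain ⟨h1, h2, h3⟩ := ih hl.2 hp
        exact ⟨List.mem_cons_of_mem _ h1, List.mem_cons_of_mem _ h2, h3⟩

theorem List.sum_map_zip_eq_of_additive {M : Type*} [AddCommMonoid M] {f : ℝ → ℝ → M}
    {x : ℝ} {l : List ℝ} (hf : ∀ r s t, x ≤ r → r < s → s < t → f r t = f r s + f s t)
    (hsorted : (x :: l).Pairwise (· < ·)) (hl : l ≠ []) :
    (((x :: l).zip l).map fun p => f p.1 p.2).sum = f x (l.getLast hl) := by
  induction l generalizing x with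
  | nil => exact absurd rfl hl
  | cons y l ih =>
    rw [List.pairwise_cons] at hsorted
    rcases eq_or_ne l [] with rfl | hl
    · simp
    have hxy : x < y := hsorted.1 y List.mem_cons_self
    have hy_last : y < l.getLast hl :=
      (List.pairwise_cons.1 hsorted.2).1 _ (List.getLast_mem hl)
    have hf' : ∀ r s t, y ≤ r → r < s → s < t → f r t = f r s + f s t :=
      fun r s t hr => hf r s t (hxy.le.trans hr)
    rw [List.zip_cons_cons, List.map_cons, List.sum_cons, ih hf' hsorted.2 hl,
      List.getLast_cons hl, hf x y _ le_rfl hxy hy_last]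

theorem List.le_foldr_max_of_mem {l : List ℝ} {x : ℝ} (hx : x ∈ l) : x ≤ l.foldr max 0 := by
  induction l with
  | nil => simp at hx
  | cons y l ih =>
    rcases List.mem_cons.1 hx with rfl | hx
    · exact le_max_left _ _
    · exact (ih hx).trans (le_max_right _ _)

theorem length_consecPairs (α : Finset ℝ) : (consecPairs α).length = α.card - 1 := by
  simp [consecPairs]

theorem sub_le_mesh {α : Finset ℝ} {p : ℝ × ℝ} (hp : p ∈ consecPairs α) : p.2 - p.1 ≤ mesh α :=
  List.le_foldr_max_of_mem (List.mem_map_of_mem hp)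

namespace IsPartition

variable {R S : ℝ} {α : Finset ℝ}

theorem mem_consecPairs (hα : IsPartition R S α) {p : ℝ × ℝ} (hp : p ∈ consecPairs α) :
    R ≤ p.1 ∧ p.1 < p.2 ∧ p.2 ≤ S := by
  obtain ⟨h1, h2, h12⟩ := List.rel_of_mem_zip_tail (Finset.sortedLT_sort α).pairwise hp
  rw [Finset.mem_sort] at h1 h2
  exact ⟨(hα.2.2 _ h1).1, h12, (hα.2.2 _ h2).2⟩

theorem exists_sort_eq_cons (hα : IsPartition R S α) (hRS : R < S) :
    ∃ (l : List ℝ) (hl : l ≠ []), α.sort = R :: l ∧ l.getLast hl = S := by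
  have hsorted : α.sort.Pairwise (· ≤ ·) := α.pairwise_sort _
  have hmem : ∀ {t}, t ∈ α.sort ↔ t ∈ α := Finset.mem_sort _
  obtain ⟨x, l, hxl⟩ := List.exists_cons_of_ne_nil (List.ne_nil_of_mem (hmem.2 hα.1))
  have hx : x = R := by
    have hR : R ∈ x :: l := hxl ▸ hmem.2 hα.1
    rw [hxl, List.pairwise_cons] at hsorted
    exact le_antisymm ((List.mem_cons.1 hR).elim (·.ge) (hsorted.1 R))
      (hα.2.2 x (hmem.1 (hxl ▸ List.mem_cons_self))).1
  subst hx
  have hl : l ≠ [] := by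
    rintro rfl
    have hS : S ∈ [x] := hxl ▸ hmem.2 hα.2.1
    exact hRS.ne (List.mem_singleton.1 hS).symm
  refine ⟨l, hl, hxl, le_antisymm ?_ ?_⟩
  · exact (hα.2.2 _ (hmem.1 (hxl ▸ List.mem_cons_of_mem _ (List.getLast_mem hl)))).2
  · have := hsorted.rel_getLast (hmem.2 hα.2.1)
    simpa [hxl, List.getLast_cons hl] using this

theorem sum_consecPairs (hα : IsPartition R S α) (hRS : R < S) {M : Type*} [AddCommMonoid M]
    {f : ℝ → ℝ → M} (hf : ∀ r s t, R ≤ r → r < s → s < t → f r t = f r s + f s t) :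
    ((consecPairs α).map fun p => f p.1 p.2).sum = f R S := by
  obtain ⟨l, hl, hsort, hlast⟩ := hα.exists_sort_eq_cons hRS
  have hsorted : (R :: l).Pairwise (· < ·) := hsort ▸ (Finset.sortedLT_sort α).pairwise
  rw [consecPairs, hsort, List.tail_cons, List.sum_map_zip_eq_of_additive hf hsorted hl, hlast]

end IsPartition

theorem IsNetLimit.norm_sub_le {A : Type*} [NormedRing A] {g : ℝ → ℝ → A} {r s : ℝ} {u v : A}
    {B : ℝ} (hu : IsNetLimit g r s u) (hB : ∀ β, IsPartition r s β → ‖partitionProd g β - v‖ ≤ B) :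
    ‖u - v‖ ≤ B := by
  refine le_of_forall_pos_lt_add fun ε hε => ?_
  obtain ⟨γ, hγ, hlim⟩ := hu ε hε
  calc ‖u - v‖ ≤ ‖u - partitionProd g γ‖ + ‖partitionProd g γ - v‖ :=
        norm_sub_le_norm_sub_add_norm_sub _ _ _
    _ = ‖partitionProd g γ - u‖ + ‖partitionProd g γ - v‖ := by rw [norm_sub_rev u]
    _ < B + ε := by linarith [hlim γ hγ subset_rfl, hB γ hγ]

section Increments

variable {A : Type*} [NormedRing A] [NormOneClass A] {C : ℝ} {a : ℝ → ℝ → A}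

theorem norm_partitionProd_sub_le (ha_norm : ∀ r s, 0 ≤ r → r ≤ s → ‖a r s‖ ≤ (s - r) * C)
    (ha_add : ∀ r s t, 0 ≤ r → r < s → s < t → a r t = a r s + a s t)
    {r s : ℝ} (hr : 0 ≤ r) (hrs : r < s) {β : Finset ℝ} (hβ : IsPartition r s β) :
    ‖partitionProd (fun p q => 1 + a p q) β - (1 + a r s)‖ ≤
      Real.exp (C * (s - r)) - 1 - C * (s - r) := by
  have hw : ∀ p ∈ consecPairs β, ‖a p.1 p.2‖ ≤ C * (p.2 - p.1) := fun p hp => by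
    obtain ⟨hrp, hp, -⟩ := hβ.mem_consecPairs hp
    simpa [mul_comm] using ha_norm _ _ (hr.trans hrp) hp.le
  have hsum_a := hβ.sum_consecPairs hrs fun u v w hu => ha_add u v w (hr.trans hu)
  have hsum_w := hβ.sum_consecPairs (f := fun u v => C * (v - u)) hrs fun _ _ _ _ _ _ => by ring
  have hprod := List.prod_map_one_add_le_exp_sum fun p hp => (norm_nonneg _).trans (hw p hp)
  have hmajor := List.norm_prod_map_one_add_sub_one_sub_sum_le hw
  rw [hsum_a] at hmajor
  rw [hsum_w] at hmajor hprod
  rw [partitionProd, ← sub_sub]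
  linarith

theorem IsNetLimit.norm_sub_one_add_le (hC : 0 ≤ C)
    (ha_norm : ∀ r s, 0 ≤ r → r ≤ s → ‖a r s‖ ≤ (s - r) * C)
    (ha_add : ∀ r s t, 0 ≤ r → r < s → s < t → a r t = a r s + a s t)
    {r s : ℝ} (hr : 0 ≤ r) (hrs : r < s) {u : A} (hu : IsNetLimit (fun p q => 1 + a p q) r s u) :
    ‖u - (1 + a r s)‖ ≤ (C * (s - r)) ^ 2 / 2 * Real.exp (C * (s - r)) :=
  (hu.norm_sub_le fun _ hβ => norm_partitionProd_sub_le ha_norm ha_add hr hrs hβ).trans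
    (Real.exp_sub_one_sub_le_sq_div_two_mul_exp (mul_nonneg hC (sub_pos.2 hrs).le))

end Increments

theorem IsPartition.smul_one_add_partitionSum_sub_eq {A : Type*} [Ring A] {R S : ℝ}
    {α : Finset ℝ} (hα : IsPartition R S α) (hRS : R < S) (U c : ℝ → ℝ → A)
    (hc : ∀ r s t, R ≤ r → r < s → s < t → c r t = c r s + c s t) :
    ((1 - ((α.card : ℤ) - 1)) • (1 : A) + partitionSum U α) - (1 + c R S) =
      ((consecPairs α).map fun p => U p.1 p.2 - (1 + c p.1 p.2)).sum := by
  have hcard : (α.card : ℤ) - 1 = (consecPairs α).length := by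
    rw [length_consecPairs, Nat.cast_sub (Finset.card_pos.2 ⟨R, hα.1⟩)]; rfl
  rw [← hα.sum_consecPairs hRS hc, hcard, partitionSum]
  induction consecPairs α with
  | nil => simp
  | cons p l ih =>
    simp only [List.map_cons, List.sum_cons, List.length_cons]
    rw [← ih]
    push_cast
    module

theorem stmt_13_general {A : Type*} [NormedRing A] [NormOneClass A]
    (C : ℝ) (hC : 0 < C)
    (a : ℝ → ℝ → A)
    (ha_norm : ∀ r s, 0 ≤ r → r ≤ s → ‖a r s‖ ≤ (s - r) * C)
    (ha_add : ∀ r s t, 0 ≤ r → r < s → s < t → a r t = a r s + a s t)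
    (U : ℝ → ℝ → A)
    (hU : ∀ r s, 0 ≤ r → r < s → IsNetLimit (fun p q => (1 : A) + a p q) r s (U r s))
    (R S : ℝ) (hR : 0 ≤ R) (hRS : R < S) :
    ∀ α : Finset ℝ, IsPartition R S α →
      ‖((1 - ((α.card : ℤ) - 1)) • (1 : A) + partitionSum U α) - (1 + a R S)‖ ≤
        (1 / 2) * mesh α * (S - R) * C ^ 2 * Real.exp (C * (S - R)) := by
  intro α hα
  have hterm : ∀ p ∈ consecPairs α, ‖U p.1 p.2 - (1 + a p.1 p.2)‖ ≤
      (p.2 - p.1) * (1 / 2 * mesh α * C ^ 2 * Real.exp (C * (S - R))) := by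
    intro p hp
    obtain ⟨hRp, hp12, hpS⟩ := hα.mem_consecPairs hp
    have hp0 : 0 ≤ p.1 := hR.trans hRp
    refine ((hU _ _ hp0 hp12).norm_sub_one_add_le hC.le ha_norm ha_add hp0 hp12).trans ?_
    calc (C * (p.2 - p.1)) ^ 2 / 2 * Real.exp (C * (p.2 - p.1))
        = (p.2 - p.1) * (1 / 2 * (p.2 - p.1) * C ^ 2 * Real.exp (C * (p.2 - p.1))) := by ring
      _ ≤ (p.2 - p.1) * (1 / 2 * mesh α * C ^ 2 * Real.exp (C * (S - R))) := by
        have hmesh := sub_le_mesh hp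
        gcongr ?_ * (_ * ?_ * _ * Real.exp (C * ?_))
        · exact mul_nonneg (mul_nonneg one_half_pos.le (by linarith)) (sq_nonneg C)
        · linarith
  rw [hα.smul_one_add_partitionSum_sub_eq hRS U a fun r s t hr => ha_add r s t (hR.trans hr)]
  calc _ ≤ ((consecPairs α).map fun p =>
          (p.2 - p.1) * (1 / 2 * mesh α * C ^ 2 * Real.exp (C * (S - R)))).sum :=
        List.norm_sum_map_le_sum_map hterm
    _ = (S - R) * (1 / 2 * mesh α * C ^ 2 * Real.exp (C * (S - R))) := by
      rw [List.sum_map_mul_right,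
        hα.sum_consecPairs hRS (f := fun r s => s - r) fun _ _ _ _ _ _ => by ring]
    _ = _ := by ring

/-- mesh estimate for the difference between
`(1 - n)·1 + ∑_{j=1}^{n} U_{t_j,t_{j+1}}` and `g_{R,S}` for a partition
`α = {R = t₁ < … < t_{n+1} = S}` of `[R, S]`. -/
theorem stmt_13 {A : Type*} [NormedRing A] [NormOneClass A] [NormedAlgebra ℂ A]
    [CompleteSpace A]
    (C : ℝ) (hC : 0 < C)
    (a : ℝ → ℝ → A)
    (ha_norm : ∀ r s, 0 ≤ r → r ≤ s → ‖a r s‖ ≤ (s - r) * C)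
    (ha_add : ∀ r s t, 0 ≤ r → r < s → s < t → a r t = a r s + a s t)
    (U : ℝ → ℝ → A)
    (hU : ∀ r s, 0 ≤ r → r < s → IsNetLimit (fun p q => (1 : A) + a p q) r s (U r s))
    (R S : ℝ) (hR : 0 ≤ R) (hRS : R < S) :
    ∀ α : Finset ℝ, IsPartition R S α →
      ‖((1 - ((α.card : ℤ) - 1)) • (1 : A) + partitionSum U α) - (1 + a R S)‖ ≤
        (1 / 2) * mesh α * (S - R) * C ^ 2 * Real.exp (C * (S - R)) :=
  stmt_13_general C hC a ha_norm ha_add U hU R S hR hRS
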